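/- arXiv:2303.10530 — 9 statements merged into one kernel-verified Lean document; each statement's English description precedes it below -/
import Mathlib

section
/- For all integers a ≥ b > 0, and all non-negative integer sequences (x_1, x_2, ...) and (y_1, y_2, ...) satisfying ∑_{i≥1} (x_i + y_i) = a and x_j + y_j ≤ b for every j ≥ 1, the sum ∑_{i≥1} x_i·y_i is at most ⌊a/b⌋·b²/4 + (a - b·⌊a/b⌋)²/4. -/
/-! By `4xy ≤ (x + y)²` it suffices to bound `∑ fᵢ²` for numbers `0 ≤ fᵢ ≤ b` with total `a`.
Moving mass from a smaller term to a larger one increases the sum of squares, so the worst case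
packs the total into `⌊a/b⌋` terms equal to `b` and one term equal to `a mod b`. Adding the terms
one at a time, it is enough to merge each new term with the current remainder in this way. -/

open Finset

lemma sq_add_sq_le_div_mul_sq_add_mod_sq {b s r : ℕ} (hs : s ≤ b) (hr : r < b) :
    s ^ 2 + r ^ 2 ≤ (s + r) / b * b ^ 2 + ((s + r) % b) ^ 2 := by
  rcases lt_or_ge (s + r) b with h | h
  · rw [Nat.div_eq_of_lt h, Nat.mod_eq_of_lt h]
    nlinarith
  · rw [Nat.div_eq_of_lt_le (k := 1) (by omega) (by omega),
      Nat.mod_eq_sub_mod h, Nat.mod_eq_of_lt (by omega)]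
    -- `b² + (s + r - b)² - s² - r² = 2 (b - s) (b - r)`
    zify [h, hs, hr.le]
    nlinarith [mul_nonneg (sub_nonneg.2 (by exact_mod_cast hs : (s : ℤ) ≤ b))
      (sub_nonneg.2 (by exact_mod_cast hr.le : (r : ℤ) ≤ b))]

lemma sum_sq_le_div_mul_sq_add_mod_sq {ι : Type*} {b : ℕ} (hb : 0 < b) {f : ι → ℕ}
    (hf : ∀ i, f i ≤ b) (s : Finset ι) :
    ∑ i ∈ s, f i ^ 2 ≤ (∑ i ∈ s, f i) / b * b ^ 2 + ((∑ i ∈ s, f i) % b) ^ 2 := by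
  classical
  induction s using Finset.induction_on with
  | empty => simp
  | insert j s hj ih =>
    rw [sum_insert hj, sum_insert hj]
    set t := ∑ i ∈ s, f i
    have hsplit : f j + t = (f j + t % b) + t / b * b := by
      have := Nat.mod_add_div t b
      linarith
    rw [hsplit, Nat.add_mul_div_right _ _ hb, Nat.add_mul_mod_self_right, add_mul]
    have := sq_add_sq_le_div_mul_sq_add_mod_sq (hf j) (Nat.mod_lt t hb)
    omega

theorem stmt0_general (a b : ℕ) (hb : 0 < b) (x y : ℕ →₀ ℕ)
    (hsum : ∑ i ∈ x.support ∪ y.support, (x i + y i) = a)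
    (hle : ∀ j : ℕ, x j + y j ≤ b) :
    4 * ∑ i ∈ x.support ∪ y.support, x i * y i
      ≤ a / b * b ^ 2 + (a - b * (a / b)) ^ 2 := by
  calc 4 * ∑ i ∈ x.support ∪ y.support, x i * y i
      = ∑ i ∈ x.support ∪ y.support, 4 * x i * y i := by simp only [mul_sum, mul_assoc]
    _ ≤ ∑ i ∈ x.support ∪ y.support, (x i + y i) ^ 2 :=
      sum_le_sum fun i _ => four_mul_le_sq_add (x i) (y i)
    _ ≤ a / b * b ^ 2 + (a % b) ^ 2 :=
      hsum ▸ sum_sq_le_div_mul_sq_add_mod_sq hb hle _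
    _ = a / b * b ^ 2 + (a - b * (a / b)) ^ 2 := by rw [Nat.mod_eq_sub_mul_div]

/-- Lemma 2.6: for integers `a ≥ b > 0` and finitely supported sequences of
non-negative integers `x, y` with `∑ (xᵢ + yᵢ) = a` and `xⱼ + yⱼ ≤ b` for all `j`,
we have `∑ xᵢ yᵢ ≤ ⌊a/b⌋ b²/4 + (a - b⌊a/b⌋)²/4` (stated multiplied by 4). -/
theorem stmt0 (a b : ℕ) (hb : 0 < b) (hab : b ≤ a) (x y : ℕ →₀ ℕ)
    (hsum : ∑ i ∈ x.support ∪ y.support, (x i + y i) = a)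
    (hle : ∀ j : ℕ, x j + y j ≤ b) :
    4 * ∑ i ∈ x.support ∪ y.support, x i * y i
      ≤ a / b * b ^ 2 + (a - b * (a / b)) ^ 2 :=
  stmt0_general a b hb x y hsum hle
end

section
/- Every tournament T on n vertices has at most (n³ - n)/24 cyclic triangles if n is odd, and at most (n³ - 4n)/24 cyclic triangles if n is even. -/
/-! A 3-set of vertices that is not a cyclic triangle has exactly one vertex beating the other
two, and a vertex of outdegree `d` plays this role for `d.choose 2` such sets. Hence
`c + ∑ v, (d v).choose 2 = n.choose 3`, where `c` counts cyclic triangles, and together with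
`∑ v, d v = n.choose 2` this rearranges to `24 c + 3 ∑ v, (2 d v - (n - 1)) ^ 2 = n ^ 3 - n`.
The sum of squares is nonnegative, and when `n` is even it is at least `n`, since every
`2 d v - (n - 1)` is then odd. -/

open scoped Classical

/-- A tournament: an irreflexive relation such that for distinct `u v`, exactly one of
`r u v`, `r v u` holds. -/
def IsTournament {V : Type*} (r : V → V → Prop) : Prop :=
  (∀ v, ¬ r v v) ∧ ∀ u v : V, u ≠ v → (r u v ↔ ¬ r v u)

/-- The set of cyclic triangles of a tournament on `Fin n`: 3-element vertex sets
`{u,v,w}` with `u → v`, `v → w`, `w → u`. -/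
noncomputable def cyclicTriangles (n : ℕ) (r : Fin n → Fin n → Prop) :
    Finset (Finset (Fin n)) :=
  (Finset.powersetCard 3 (Finset.univ : Finset (Fin n))).filter
    (fun s => ∃ u v w, u ∈ s ∧ v ∈ s ∧ w ∈ s ∧ r u v ∧ r v w ∧ r w u)

open Finset

lemma Nat.cast_choose_three_mul_six {R : Type*} [CommRing R] (n : ℕ) :
    (n.choose 3 : R) * 6 = n * (n - 1) * (n - 2) := by
  obtain _ | _ | n := n
  · simp
  · norm_num [Nat.choose]
  have h := congrArg (Nat.cast (R := R)) (Nat.descFactorial_eq_factorial_mul_choose (n + 2) 3)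
  rw [Nat.cast_descFactorial] at h
  simp [ascPochhammer_succ_eval, Nat.factorial] at h
  push_cast
  linear_combination -h

lemma one_le_sq_two_mul_sub_of_even (d : ℕ) {n : ℕ} (hn : Even n) :
    (1 : ℚ) ≤ (2 * d - (n - 1)) ^ 2 := by
  obtain ⟨m, rfl⟩ := hn
  have hodd : (2 * d - ((m + m : ℕ) - 1) : ℚ) = ((2 * ((d : ℤ) - m) + 1 : ℤ) : ℚ) := by
    push_cast
    ring
  rw [hodd]
  have : (1 : ℤ) ≤ (2 * ((d : ℤ) - m) + 1) ^ 2 := by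
    rcases le_or_gt 0 ((d : ℤ) - m) with h | h <;> nlinarith
  exact_mod_cast this

section Tournament

variable {V : Type*} {r : V → V → Prop}

namespace IsTournament

lemma ne_of_rel (hr : IsTournament r) {u v : V} (h : r u v) : u ≠ v := by
  rintro rfl
  exact hr.1 u h

lemma asymm (hr : IsTournament r) {u v : V} (h : r u v) : ¬ r v u :=
  (hr.2 u v (hr.ne_of_rel h)).mp h

lemma rel_of_not_rel (hr : IsTournament r) {u v : V} (huv : u ≠ v) (h : ¬ r u v) : r v u :=
  (hr.2 v u huv.symm).mpr h

lemma xor_rel (hr : IsTournament r) {u v : V} (huv : u ≠ v) : Xor (r u v) (r v u) := by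
  by_cases h : r u v
  · exact Or.inl ⟨h, hr.asymm h⟩
  · exact Or.inr ⟨hr.rel_of_not_rel huv h, h⟩

end IsTournament

def IsSource (r : V → V → Prop) (t : Finset V) (v : V) : Prop :=
  v ∈ t ∧ ∀ u ∈ t, u ≠ v → r v u

def IsCyclicTriple (r : V → V → Prop) (t : Finset V) : Prop :=
  ∃ u v w, u ∈ t ∧ v ∈ t ∧ w ∈ t ∧ r u v ∧ r v w ∧ r w u

variable [Fintype V]

noncomputable def outdeg (r : V → V → Prop) (v : V) : ℕ := #{u | r v u}

namespace IsTournament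

lemma outdeg_add_card_in (hr : IsTournament r) (v : V) :
    outdeg r v + #{u | r u v} = Fintype.card V - 1 := by
  rw [← card_univ, ← card_erase_of_mem (mem_univ v),
    ← card_filter_add_card_filter_not (s := univ.erase v) (r v), outdeg]
  congr 1 <;> congr 1 <;> ext u <;>
    simp only [mem_filter, mem_univ, mem_erase, true_and, and_true, ne_eq]
  · exact ⟨fun h => ⟨(hr.ne_of_rel h).symm, h⟩, And.right⟩
  · exact ⟨fun h => ⟨hr.ne_of_rel h, hr.asymm h⟩, fun h => hr.rel_of_not_rel (Ne.symm h.1) h.2⟩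

lemma sum_outdeg (hr : IsTournament r) : ∑ v, outdeg r v = (Fintype.card V).choose 2 := by
  have h : 2 * ∑ v, outdeg r v = Fintype.card V * (Fintype.card V - 1) :=
    calc 2 * ∑ v, outdeg r v = ∑ v, outdeg r v + ∑ v, #{u | r u v} := by
          rw [two_mul]
          congr 1
          exact sum_card_bipartiteAbove_eq_sum_card_bipartiteBelow r
      _ = Fintype.card V * (Fintype.card V - 1) := by
          simp [← sum_add_distrib, hr.outdeg_add_card_in]
  rw [Nat.choose_two_right, ← h]
  omega

lemma card_isSource_eq_ite (hr : IsTournament r) {t : Finset V} (ht : #t = 3) :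
    #{v | IsSource r t v} = if IsCyclicTriple r t then 0 else 1 := by
  obtain ⟨a, b, c, hab, hac, hbc, rfl⟩ := card_eq_three.mp ht
  have hsrc : ({v | IsSource r {a, b, c} v} : Finset V) =
      {v ∈ ({a, b, c} : Finset V) | ∀ u ∈ ({a, b, c} : Finset V), u ≠ v → r v u} := by
    ext v
    simp [IsSource]
  rw [hsrc]
  have ha := hr.1 a
  have hb := hr.1 b
  have hc := hr.1 c
  rcases hr.xor_rel hab with ⟨h1, h1'⟩ | ⟨h1, h1'⟩ <;>
    rcases hr.xor_rel hbc with ⟨h2, h2'⟩ | ⟨h2, h2'⟩ <;>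
    rcases hr.xor_rel hac with ⟨h3, h3'⟩ | ⟨h3, h3'⟩ <;>
    simp [filter_insert, filter_singleton, IsCyclicTriple, hab, hac, hbc, hab.symm, hac.symm,
      hbc.symm, ha, hb, hc, h1, h1', h2, h2', h3, h3']

lemma card_isSource_eq_choose (hr : IsTournament r) (v : V) :
    #{t ∈ powersetCard 3 univ | IsSource r t v} = (outdeg r v).choose 2 := by
  have hv : ∀ s ∈ powersetCard 2 {u | r v u}, v ∉ s := fun s hs hv =>
    hr.1 v (mem_filter.mp ((mem_powersetCard.mp hs).1 hv)).2
  rw [outdeg, ← card_powersetCard]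
  refine card_bij' (fun t _ => t.erase v) (fun s _ => insert v s) ?_ ?_ ?_ ?_
  · intro t ht
    obtain ⟨ht3, hvt, hsrc⟩ := mem_filter.mp ht
    rw [mem_powersetCard, card_erase_of_mem hvt, (mem_powersetCard.mp ht3).2]
    refine ⟨fun u hu => ?_, rfl⟩
    rw [mem_erase] at hu
    exact mem_filter.mpr ⟨mem_univ u, hsrc u hu.2 hu.1⟩
  · intro s hs
    obtain ⟨hsub, hcard⟩ := mem_powersetCard.mp hs
    refine mem_filter.mpr ⟨mem_powersetCard.mpr ⟨subset_univ _, ?_⟩, mem_insert_self v s, ?_⟩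
    · rw [card_insert_of_notMem (hv s hs), hcard]
    · intro u hu huv
      exact (mem_filter.mp (hsub ((mem_insert.mp hu).resolve_left huv))).2
  · intro t ht
    exact insert_erase (mem_filter.mp ht).2.1
  · intro s hs
    exact erase_insert (hv s hs)

theorem card_isCyclicTriple_add_sum_choose_outdeg (hr : IsTournament r) :
    #{t ∈ powersetCard 3 univ | IsCyclicTriple r t} + ∑ v, (outdeg r v).choose 2 =
      (Fintype.card V).choose 3 := by
  have hsrc : ∑ v, (outdeg r v).choose 2 = #{t ∈ powersetCard 3 univ | ¬ IsCyclicTriple r t} :=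
    calc ∑ v, (outdeg r v).choose 2
        = ∑ v, #{t ∈ powersetCard 3 univ | IsSource r t v} := by
          simp only [hr.card_isSource_eq_choose]
      _ = ∑ t ∈ powersetCard 3 univ, #{v | IsSource r t v} :=
          sum_card_bipartiteAbove_eq_sum_card_bipartiteBelow _
      _ = ∑ t ∈ powersetCard 3 univ, if IsCyclicTriple r t then 0 else 1 :=
          sum_congr rfl fun t ht => hr.card_isSource_eq_ite (mem_powersetCard.mp ht).2
      _ = #{t ∈ powersetCard 3 univ | ¬ IsCyclicTriple r t} := by
          simp only [card_filter, ite_not]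
  rw [hsrc, card_filter_add_card_filter_not, card_powersetCard, card_univ]

theorem twentyFour_mul_card_isCyclicTriple_add_three_mul_sum_sq (hr : IsTournament r) :
    24 * (#{t ∈ powersetCard 3 univ | IsCyclicTriple r t} : ℚ) +
        3 * ∑ v, (2 * outdeg r v - (Fintype.card V - 1) : ℚ) ^ 2 =
      Fintype.card V ^ 3 - Fintype.card V := by
  set n := Fintype.card V
  have hcount : (#{t ∈ powersetCard 3 univ | IsCyclicTriple r t} : ℚ) +
      ∑ v, ((outdeg r v).choose 2 : ℚ) = (n.choose 3 : ℚ) := by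
    exact_mod_cast hr.card_isCyclicTriple_add_sum_choose_outdeg
  have hsum : 2 * ∑ v, (outdeg r v : ℚ) = n * (n - 1) := by
    rw [← Nat.cast_sum, hr.sum_outdeg, Nat.cast_choose_two]
    ring
  have hsq : ∑ v, (2 * outdeg r v - (n - 1) : ℚ) ^ 2 =
      8 * ∑ v, ((outdeg r v).choose 2 : ℚ) - 4 * (n - 2) * ∑ v, (outdeg r v : ℚ) +
        n * (n - 1) ^ 2 :=
    calc ∑ v, (2 * outdeg r v - (n - 1) : ℚ) ^ 2
        = ∑ v, (8 * ((outdeg r v).choose 2 : ℚ) - 4 * (n - 2) * outdeg r v + (n - 1) ^ 2) :=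
          sum_congr rfl fun v _ => by rw [Nat.cast_choose_two]; ring
      _ = _ := by
          rw [sum_add_distrib, sum_sub_distrib, ← mul_sum, ← mul_sum, sum_const, card_univ,
            nsmul_eq_mul]
  rw [hsq]
  linear_combination
    24 * hcount + 4 * Nat.cast_choose_three_mul_six (R := ℚ) n + (12 - 6 * (n : ℚ)) * hsum

end IsTournament

end Tournament

lemma cyclicTriangles_eq_filter (n : ℕ) (r : Fin n → Fin n → Prop) :
    cyclicTriangles n r = {t ∈ powersetCard 3 (univ : Finset (Fin n)) | IsCyclicTriple r t} := by
  unfold cyclicTriangles IsCyclicTriple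
  congr

/-- Kendall–Smith: a tournament on `n` vertices has at most `(n³-n)/24` cyclic
triangles if `n` is odd, and at most `(n³-4n)/24` if `n` is even. -/
theorem stmt1 (n : ℕ) (r : Fin n → Fin n → Prop) (hr : IsTournament r) :
    (Odd n → 24 * (cyclicTriangles n r).card ≤ n ^ 3 - n) ∧
    (Even n → 24 * (cyclicTriangles n r).card ≤ n ^ 3 - 4 * n) := by
  have key := hr.twentyFour_mul_card_isCyclicTriple_add_three_mul_sum_sq
  rw [Fintype.card_fin, ← cyclicTriangles_eq_filter] at key
  refine ⟨fun _ => ?_, fun hn => ?_⟩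
  · have hsq : 0 ≤ ∑ v, (2 * outdeg r v - (n - 1) : ℚ) ^ 2 :=
      sum_nonneg fun v _ => sq_nonneg _
    have : (24 * #(cyclicTriangles n r) + n : ℚ) ≤ n ^ 3 := by linarith
    have : 24 * #(cyclicTriangles n r) + n ≤ n ^ 3 := by exact_mod_cast this
    omega
  · have hsq : (n : ℚ) ≤ ∑ v, (2 * outdeg r v - (n - 1) : ℚ) ^ 2 := by
      simpa using card_nsmul_le_sum univ _ 1 fun v _ =>
        one_le_sq_two_mul_sub_of_even (outdeg r v) hn
    have : (24 * #(cyclicTriangles n r) + 4 * n : ℚ) ≤ n ^ 3 := by linarith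
    have : 24 * #(cyclicTriangles n r) + 4 * n ≤ n ^ 3 := by exact_mod_cast this
    omega
end

section
/- Let L ≥ 4. If a 3-uniform hypergraph H contains no pseudo-cycle minus one hyperedge of size ℓ for every 4 ≤ ℓ ≤ L with 3 ∤ ℓ, then H contains no bottle of size at most L + 2. -/
/-- `H` contains a pseudo-cycle minus one hyperedge of size `ℓ`: a vertex sequence
`v₀v₁…v_{ℓ-1}` (repetitions allowed) with `{vᵢ, v_{i+1 mod ℓ}, v_{i+2 mod ℓ}} ∈ H`
for all `0 ≤ i ≤ ℓ-2`. -/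
def HasPseudoCycleMinus {V : Type*} [DecidableEq V] (H : Set (Finset V)) (ℓ : ℕ) : Prop :=
  ∃ v : ℕ → V, ∀ i, i + 2 ≤ ℓ →
    ({v i, v ((i + 1) % ℓ), v ((i + 2) % ℓ)} : Finset V) ∈ H

/-- `H` contains a bottle `v₀v₁…v_{k-1}v₁v₀` with `k ≥ 4` (a pseudo-path, so
repetitions allowed), i.e. a bottle of size `k + 2`. -/
def HasBottle {V : Type*} [DecidableEq V] (H : Set (Finset V)) (k : ℕ) : Prop :=
  4 ≤ k ∧ ∃ v : ℕ → V,
    (∀ i, i + 2 < k → ({v i, v (i + 1), v (i + 2)} : Finset V) ∈ H) ∧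
    ({v (k - 2), v (k - 1), v 1} : Finset V) ∈ H ∧
    ({v (k - 1), v 1, v 0} : Finset V) ∈ H

/-!
A bottle `v₀v₁…v_{k-1}v₁v₀` contains the two closed pseudo-walks `v₁v₂…v_{k-1}v₁` and
`v₂v₃…v_{k-1}v₁v₀v₂`, i.e. pseudo-cycles minus one hyperedge of sizes `k - 1` and `k`.
Of two consecutive numbers at least one is not divisible by `3`.
-/

section

variable {V : Type*} [DecidableEq V] {H : Set (Finset V)}

lemma hasPseudoCycleMinus_of_path {ℓ : ℕ} (w : ℕ → V)
    (hpath : ∀ i, i + 2 < ℓ → ({w i, w (i + 1), w (i + 2)} : Finset V) ∈ H)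
    (hclose : ({w (ℓ - 2), w (ℓ - 1), w 0} : Finset V) ∈ H) :
    HasPseudoCycleMinus H ℓ := by
  refine ⟨w, fun i hi => ?_⟩
  rw [Nat.mod_eq_of_lt (by omega : i + 1 < ℓ)]
  rcases hi.lt_or_eq with hlt | heq
  · rw [Nat.mod_eq_of_lt hlt]
    exact hpath i hlt
  · rw [heq, Nat.mod_self]
    convert hclose using 5 <;> omega

lemma HasBottle.hasPseudoCycleMinus_sub_one {k : ℕ} (hB : HasBottle H k) :
    HasPseudoCycleMinus H (k - 1) := by
  obtain ⟨hk, v, hpath, hlast, -⟩ := hB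
  refine hasPseudoCycleMinus_of_path (fun j => v (j + 1)) (fun i hi => hpath (i + 1) (by omega)) ?_
  convert hlast using 5 <;> omega

lemma HasBottle.hasPseudoCycleMinus {k : ℕ} (hB : HasBottle H k) :
    HasPseudoCycleMinus H k := by
  obtain ⟨hk, v, hpath, hlast, hlast'⟩ := hB
  refine hasPseudoCycleMinus_of_path (fun j => if j + 2 < k then v (j + 2) else v (k - 1 - j))
    (fun i hi => ?_) ?_
  · rcases (by omega : i + 4 < k ∨ i + 4 = k ∨ i + 3 = k) with h | h | h
    · simpa [show i + 2 < k by omega, show i + 3 < k by omega, show i + 4 < k by omega,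
        add_assoc] using hpath (i + 2) (by omega)
    · simp only [show i + 2 < k by omega, show i + 1 + 2 < k by omega,
        show ¬i + 2 + 2 < k by omega, if_true, if_false]
      convert hlast using 5 <;> omega
    · simp only [show i + 2 < k by omega, show ¬i + 1 + 2 < k by omega,
        show ¬i + 2 + 2 < k by omega, if_true, if_false]
      convert hlast' using 5 <;> omega
  · simp only [show ¬k - 2 + 2 < k by omega, show ¬k - 1 + 2 < k by omega,
      show 0 + 2 < k by omega, if_true, if_false]
    rw [Finset.insert_comm]
    convert hpath 0 (by omega) using 5 <;> omega

end

theorem stmt7_general {V : Type*} [DecidableEq V] (H : Set (Finset V))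
    (L : ℕ)
    (h : ∀ ℓ, 4 ≤ ℓ → ℓ ≤ L → ¬ 3 ∣ ℓ → ¬ HasPseudoCycleMinus H ℓ) :
    ∀ k, k + 2 ≤ L + 2 → ¬ HasBottle H k := by
  intro k hk hB
  have hk4 : 4 ≤ k := hB.1
  by_cases h3 : 3 ∣ k
  · exact h (k - 1) (by omega) (by omega) (by omega) hB.hasPseudoCycleMinus_sub_one
  · exact h k hk4 (by omega) h3 hB.hasPseudoCycleMinus

/-- Lemma 3.5 (first part): if a 3-graph contains no pseudo-cycle minus one hyperedge
of size `ℓ` for every `4 ≤ ℓ ≤ L` with `3 ∤ ℓ`, then it contains no bottle of size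
at most `L + 2`. -/
theorem stmt7 {V : Type*} [DecidableEq V] (H : Set (Finset V))
    (hH : ∀ e ∈ H, e.card = 3) (L : ℕ) (hL : 4 ≤ L)
    (h : ∀ ℓ, 4 ≤ ℓ → ℓ ≤ L → ¬ 3 ∣ ℓ → ¬ HasPseudoCycleMinus H ℓ) :
    ∀ k, k + 2 ≤ L + 2 → ¬ HasBottle H k :=
  stmt7_general H L h
end

section
/- If a 3-uniform hypergraph H contains no pseudo-cycle minus one hyperedge of size ℓ for any ℓ ≥ 4 with 3 ∤ ℓ, then H is orientable. -/
def Orientable {V : Type*} [DecidableEq V] (H : Set (Finset V)) : Prop :=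
  ∃ r : V → V → Prop, IsTournament r ∧
    ∀ e ∈ H, ∃ u v w : V, e = {u, v, w} ∧ r u v ∧ r v w ∧ r w u

/-!
Orienting a pair `(a, b)` of a hyperedge `{a, b, c}` as `a → b` forces `b → c` and `c → a` in
any orientation. Call the closure of this rule on ordered pairs "forcing"; it is symmetric and
commutes with reversing pairs. If no pair `(u, v)` forces its reverse `(v, u)`, then picking one
representative per class of pairs (up to forcing and reversal) and orienting everything it forces
gives a tournament in which every hyperedge is cyclic. If `(u, v)` does force `(v, u)`, the forcing
chain is a tight walk `u, v, …, v, u` of some length `n`; it closes up to a pseudo-cycle minus one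
hyperedge of size `n + 1`, or, after prepending the third vertex of the first hyperedge, of size
`n + 3`, and one of these is not divisible by `3`.
-/

namespace ThreeGraph

variable {V : Type*} [DecidableEq V] {H : Set (Finset V)}

theorem triple_rotate (a b c : V) : ({a, b, c} : Finset V) = {b, c, a} := by
  rw [Finset.insert_comm, Finset.pair_comm]

theorem triple_swap (a b c : V) : ({a, b, c} : Finset V) = {b, a, c} :=
  Finset.insert_comm a b {c}

theorem triple_self_notMem (hH : ∀ e ∈ H, e.card = 3) (a b : V) :
    ({a, b, a} : Finset V) ∉ H := fun he => by
  have hcard := hH _ he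
  rw [Finset.pair_comm, Finset.insert_eq_of_mem (Finset.mem_insert_self a {b})] at hcard
  have := Finset.card_le_two (a := a) (b := b)
  omega

inductive ForcesStep (H : Set (Finset V)) : V × V → V × V → Prop
  | mk {a b c : V} : ({a, b, c} : Finset V) ∈ H → ForcesStep H (a, b) (b, c)

def Forces (H : Set (Finset V)) : V × V → V × V → Prop :=
  Relation.ReflTransGen (ForcesStep H)

theorem forces_of_mem {a b c : V} (h : ({a, b, c} : Finset V) ∈ H) : Forces H (a, b) (b, c) :=
  .single (.mk h)

theorem ForcesStep.forces_reverse {p q : V × V} : ForcesStep H p q → Forces H q p := by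
  rintro ⟨h⟩
  rw [triple_rotate] at h
  exact (forces_of_mem h).trans (forces_of_mem (by rwa [triple_rotate] at h))

theorem ForcesStep.swap {p q : V × V} : ForcesStep H p q → ForcesStep H q.swap p.swap := by
  rintro ⟨h⟩
  exact .mk (by rwa [triple_rotate, triple_swap] at h)

theorem Forces.trans {p q r : V × V} (h : Forces H p q) (h' : Forces H q r) : Forces H p r :=
  Relation.ReflTransGen.trans h h'

theorem Forces.symm {p q : V × V} (h : Forces H p q) : Forces H q p := by
  induction h with
  | refl => exact .refl
  | tail _ hstep ih => exact hstep.forces_reverse.trans ih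

theorem Forces.swap {p q : V × V} (h : Forces H p q) : Forces H p.swap q.swap := by
  induction h with
  | refl => exact .refl
  | tail _ hstep ih => exact ih.trans hstep.swap.forces_reverse

def IsTightWalk (H : Set (Finset V)) (w : ℕ → V) (n : ℕ) : Prop :=
  ∀ i < n, ({w i, w (i + 1), w (i + 2)} : Finset V) ∈ H

theorem IsTightWalk.cons {w : ℕ → V} {n : ℕ} {a : V} (hw : IsTightWalk H w n)
    (ha : ({a, w 0, w 1} : Finset V) ∈ H) :
    IsTightWalk H (fun | 0 => a | i + 1 => w i) (n + 1)
  | 0, _ => ha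
  | i + 1, hi => hw i (by omega)

theorem Forces.exists_isTightWalk {p q : V × V} (h : Forces H p q) :
    ∃ n w, IsTightWalk H w n ∧ w 0 = p.1 ∧ w 1 = p.2 ∧ w n = q.1 ∧ w (n + 1) = q.2 := by
  induction h using Relation.ReflTransGen.head_induction_on with
  | refl => exact ⟨0, fun | 0 => q.1 | _ => q.2, fun _ h => absurd h (Nat.not_lt_zero _),
      rfl, rfl, rfl, rfl⟩
  | head hstep _ ih =>
    obtain ⟨n, w, hw, h0, h1, hn, hn1⟩ := ih
    rcases hstep with ⟨he⟩
    exact ⟨n + 1, _, hw.cons (by rwa [h0, h1]), rfl, h0, hn, hn1⟩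

theorem hasPseudoCycleMinus_of_isTightWalk {w : ℕ → V} {m : ℕ} (hw : IsTightWalk H w m)
    (hwrap : ({w m, w (m + 1), w 0} : Finset V) ∈ H) : HasPseudoCycleMinus H (m + 2) := by
  refine ⟨w, fun i hi => ?_⟩
  rw [Nat.mod_eq_of_lt (show i + 1 < m + 2 by omega)]
  rcases (show i < m ∨ i = m by omega) with hi | rfl
  · rw [Nat.mod_eq_of_lt (show i + 2 < m + 2 by omega)]
    exact hw i hi
  · rwa [Nat.mod_self]

theorem not_forces_swap (hH : ∀ e ∈ H, e.card = 3)
    (h : ∀ ℓ, 4 ≤ ℓ → ¬ 3 ∣ ℓ → ¬ HasPseudoCycleMinus H ℓ) {u v : V} (huv : u ≠ v) :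
    ¬ Forces H (u, v) (v, u) := fun hf => by
  obtain ⟨n, w, hw, h0, h1, hn, hn1⟩ := hf.exists_isTightWalk
  dsimp only at h0 h1 hn hn1
  obtain ⟨k, rfl⟩ : ∃ k, n = k + 2 := by
    refine ⟨n - 2, ?_⟩
    have hn_ne_zero : n ≠ 0 := by rintro rfl; exact huv (h0 ▸ hn)
    have hn_ne_one : n ≠ 1 := by
      rintro rfl
      exact triple_self_notMem hH u v (by simpa [h0, h1, hn1] using hw 0 (by omega))
    omega
  have hfirst : ({u, v, w 2} : Finset V) ∈ H := h0 ▸ h1 ▸ hw 0 (by omega)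
  by_cases h3 : 3 ∣ k + 3
  · refine h (k + 5) (by omega) (by omega) ?_
    refine hasPseudoCycleMinus_of_isTightWalk (m := k + 3) (hw.cons (a := w 2) ?_) ?_
    · rwa [h0, h1, triple_rotate]
    · simpa only [hn, hn1, triple_swap v u] using hfirst
  · refine h (k + 3) (by omega) h3 ?_
    refine hasPseudoCycleMinus_of_isTightWalk (m := k + 1) (fun i hi => hw i (by omega)) ?_
    simpa only [h0, ← hn1] using hw (k + 1) (by omega)

def forcingSetoid (H : Set (Finset V)) : Setoid (V × V) where
  r p q := Forces H p q ∨ Forces H p q.swap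
  iseqv := by
    refine ⟨fun _ => .inl .refl, ?_, ?_⟩
    · rintro p q (h | h)
      · exact .inl h.symm
      · exact .inr (by simpa using h.swap.symm)
    · rintro p q r (h | h) (h' | h')
      · exact .inl (h.trans h')
      · exact .inr (h.trans h')
      · exact .inr (h.trans h'.swap)
      · exact .inl (by simpa only [Prod.swap_swap] using Forces.trans h h'.swap)

noncomputable def orientation (H : Set (Finset V)) (x y : V) : Prop :=
  x ≠ y ∧ Forces H (Quotient.mk (forcingSetoid H) (x, y)).out (x, y)

theorem orientation_of_forces {x y x' y' : V} (hxy : orientation H x y)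
    (hf : Forces H (x, y) (x', y')) (hne : x' ≠ y') : orientation H x' y' := by
  refine ⟨hne, ?_⟩
  rw [← Quotient.sound (s := forcingSetoid H) (.inl hf)]
  exact hxy.2.trans hf

theorem orientation_cyclic {x y z : V} (he : ({x, y, z} : Finset V) ∈ H)
    (hxy : orientation H x y) (hyz : y ≠ z) (hzx : z ≠ x) :
    orientation H y z ∧ orientation H z x := by
  have hyz' := orientation_of_forces hxy (forces_of_mem he) hyz
  rw [triple_rotate] at he
  exact ⟨hyz', orientation_of_forces hyz' (forces_of_mem he) hzx⟩

theorem isTournament_orientation (hno : ∀ u v : V, u ≠ v → ¬ Forces H (u, v) (v, u)) :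
    IsTournament (orientation H) := by
  refine ⟨fun x hx => hx.1 rfl, fun x y hxy => ?_⟩
  have hcls : Quotient.mk (forcingSetoid H) (y, x) = Quotient.mk _ (x, y) :=
    Quotient.sound (.inr .refl)
  constructor
  · rintro ⟨-, hx⟩ ⟨-, hy⟩
    rw [hcls] at hy
    exact hno x y hxy (hx.symm.trans hy)
  · intro hyx
    refine ⟨hxy, (Quotient.mk_out (s := forcingSetoid H) (x, y)).resolve_right fun h => hyx ?_⟩
    exact ⟨hxy.symm, hcls ▸ h⟩

end ThreeGraph

open ThreeGraph in
/-- Lemma 3.5 (second part): a 3-graph containing no pseudo-cycle minus one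
hyperedge of size `ℓ` for any `ℓ ≥ 4` with `3 ∤ ℓ` is orientable. -/
theorem stmt8 {V : Type*} [DecidableEq V] (H : Set (Finset V))
    (hH : ∀ e ∈ H, e.card = 3)
    (h : ∀ ℓ, 4 ≤ ℓ → ¬ 3 ∣ ℓ → ¬ HasPseudoCycleMinus H ℓ) :
    Orientable H := by
  have hT := isTournament_orientation fun _ _ huv => not_forces_swap hH h huv
  refine ⟨orientation H, hT, fun e he => ?_⟩
  obtain ⟨a, b, c, hab, hac, hbc, rfl⟩ := Finset.card_eq_three.mp (hH e he)
  by_cases hab' : orientation H a b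
  · exact ⟨a, b, c, rfl, hab', orientation_cyclic he hab' hbc hac.symm⟩
  · have hba : orientation H b a := (hT.2 b a hab.symm).mpr hab'
    rw [triple_swap] at he ⊢
    exact ⟨b, a, c, rfl, hba, orientation_cyclic he hba hac hbc.symm⟩
end

section
/- Every triangle-free graph G with n vertices and m edges can be made bipartite by removing at most m - 4m²/n² edges. -/
/-!
Pick a vertex `v` maximising `∑ u ∈ N(v), deg u`. Summed over all `v` these quantities give
`∑ u, deg u ^ 2 ≥ (2m)² / n`, so the maximum is at least `4m²/n²`. In a triangle-free graph
`A = N(v)` is independent, so the edges between `A` and its complement are exactly the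
`∑ a ∈ A, deg a` edges at `A`; keeping only them leaves a bipartite graph.
-/

open Finset SimpleGraph

namespace SimpleGraph

variable {V : Type*} [Fintype V] (G : SimpleGraph V) [DecidableRel G.Adj]

theorem sum_sum_degree_neighborFinset :
    ∑ v, ∑ u ∈ G.neighborFinset v, G.degree u = ∑ u, G.degree u ^ 2 := by
  simp only [neighborFinset_eq_filter, sum_filter]
  rw [sum_comm]
  refine sum_congr rfl fun u _ => ?_
  simp only [G.adj_comm _ u]
  rw [← sum_filter, sum_const, ← neighborFinset_eq_filter, card_neighborFinset_eq_degree,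
    smul_eq_mul, sq]

theorem four_mul_card_edgeFinset_sq_le :
    4 * #G.edgeFinset ^ 2 ≤ Fintype.card V * ∑ v, G.degree v ^ 2 := by
  calc 4 * #G.edgeFinset ^ 2 = (∑ v, G.degree v) ^ 2 := by
        rw [sum_degrees_eq_twice_card_edges]; ring
    _ ≤ Fintype.card V * ∑ v, G.degree v ^ 2 := sq_sum_le_card_mul_sum_sq

theorem exists_four_mul_card_edgeFinset_sq_le [Nonempty V] :
    ∃ v, 4 * #G.edgeFinset ^ 2 ≤ Fintype.card V ^ 2 * ∑ u ∈ G.neighborFinset v, G.degree u := by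
  obtain ⟨v, -, hv⟩ := exists_le_of_sum_le (s := univ)
    (f := fun _ => 4 * #G.edgeFinset ^ 2)
    (g := fun v => Fintype.card V ^ 2 * ∑ u ∈ G.neighborFinset v, G.degree u) univ_nonempty <| by
    rw [sum_const, card_univ, smul_eq_mul, ← mul_sum, sum_sum_degree_neighborFinset,
      sq (Fintype.card V), mul_assoc]
    exact Nat.mul_le_mul_left _ G.four_mul_card_edgeFinset_sq_le
  exact ⟨v, hv⟩

theorem exists_isIndepSet_four_mul_card_edgeFinset_sq_le (hG : G.CliqueFree 3) :
    ∃ A : Finset V, G.IsIndepSet A ∧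
      4 * #G.edgeFinset ^ 2 ≤ Fintype.card V ^ 2 * ∑ a ∈ A, G.degree a := by
  cases isEmpty_or_nonempty V
  · exact ⟨∅, by simp, by simp [eq_empty_of_isEmpty G.edgeFinset]⟩
  · obtain ⟨v, hv⟩ := G.exists_four_mul_card_edgeFinset_sq_le
    exact ⟨G.neighborFinset v, by simpa using isIndepSet_neighborSet_of_triangleFree G hG v, hv⟩

variable [DecidableEq V]

theorem degree_between_compl_of_isIndepSet {A : Finset V} (hA : G.IsIndepSet A) {v : V}
    (hv : v ∈ A) : (G.between A Aᶜ).degree v = G.degree v := by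
  rw [← card_neighborFinset_eq_degree, ← card_neighborFinset_eq_degree]
  congr 1
  ext w
  simp only [mem_neighborFinset, between_adj, Set.mem_compl_iff, mem_coe]
  exact ⟨fun h => h.1, fun h => ⟨h, Or.inl ⟨hv, fun hw => hA hv hw (G.ne_of_adj h) h⟩⟩⟩

theorem card_edgeFinset_between_compl_of_isIndepSet {A : Finset V} (hA : G.IsIndepSet A) :
    #(G.between A Aᶜ).edgeFinset = ∑ a ∈ A, G.degree a := by
  have hbip : (G.between A Aᶜ).IsBipartiteWith A ↑Aᶜ := by
    simpa using between_isBipartiteWith disjoint_compl_right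
  rw [← isBipartiteWith_sum_degrees_eq_card_edges hbip]
  exact sum_congr rfl fun a ha => G.degree_between_compl_of_isIndepSet hA ha

end SimpleGraph

/-- Erdős–Faudree–Pach–Spencer (weak form): every triangle-free graph `G` with
`n` vertices and `m` edges can be made bipartite by deleting at most
`m - 4m²/n²` edges. -/
theorem stmt11 {V : Type*} [Fintype V] [DecidableEq V] (G : SimpleGraph V)
    [DecidableRel G.Adj] (hG : G.CliqueFree 3) :
    ∃ s : Finset (Sym2 V), s ⊆ G.edgeFinset ∧
      ((s.card : ℝ) ≤ (G.edgeFinset.card : ℝ)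
          - 4 * (G.edgeFinset.card : ℝ) ^ 2 / (Fintype.card V : ℝ) ^ 2) ∧
      (G.deleteEdges ↑s).Colorable 2 := by
  obtain ⟨A, hA, hsum⟩ := G.exists_isIndepSet_four_mul_card_edgeFinset_sq_le hG
  have hle : G.between A Aᶜ ≤ G := between_le
  refine ⟨G.edgeFinset \ (G.between A Aᶜ).edgeFinset, sdiff_subset, ?_, ?_⟩
  · have hcard := card_sdiff_add_card_eq_card (edgeFinset_subset_edgeFinset.mpr hle)
    rw [G.card_edgeFinset_between_compl_of_isIndepSet hA] at hcard
    have hdiv : 4 * (#G.edgeFinset : ℝ) ^ 2 / (Fintype.card V : ℝ) ^ 2 ≤ ∑ a ∈ A, G.degree a :=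
      div_le_of_le_mul₀ (by positivity) (by positivity)
        (by exact_mod_cast hsum.trans_eq (mul_comm _ _))
    have hcardR := congrArg (Nat.cast : ℕ → ℝ) hcard
    push_cast at hcardR hdiv
    linarith
  · rw [coe_sdiff, coe_edgeFinset, coe_edgeFinset, deleteEdges_sdiff_eq_of_le hle]
    exact between_isBipartite disjoint_compl_right
end

section
/- Let Δ₀ be the equilateral triangle. For every finite point set P ⊆ ℝ² and every integer ℓ ≥ 4 with 3 ∤ ℓ, the 3-graph H(P, Δ₀) on vertex set P, whose hyperedges are the triples of points forming an equilateral triangle, contains no copy of C_ℓ⁻ (the tight cycle on ℓ vertices minus one hyperedge). -/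
/-!
Identify the plane with `ℂ`. If `a, b, c` is an equilateral triangle then `c - b = ω^k (b - a)`
for a primitive cube root of unity `ω`. Along the cycle the edge vectors
`zᵢ = v_{i+1} - vᵢ` (`0 ≤ i < ℓ`) are therefore all of the form `ω^{kᵢ} z₀`: the `ℓ - 1`
hyperedges supply exactly the `ℓ - 1` ratios needed, and the missing one is not used. The edges
of a closed polygon sum to zero, so `∑ ω^{kᵢ} = 0`. The real functional `z ↦ re z + √3 im z` takes
the values `1, 1, -2` on `1, ω, ω²`, all `≡ 1 mod 3`; applied to the sum it gives `ℓ ≡ 0 mod 3`.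
-/

open Complex

noncomputable def ω : ℂ := (-1 + √3 * I) / 2

lemma omega_re : ω.re = -1 / 2 := by simp [ω]

lemma omega_im : ω.im = √3 / 2 := by simp [ω]

lemma omega_sq_add_omega_add_one : ω ^ 2 + ω + 1 = 0 := by
  have h3 : ((√3 : ℝ) : ℂ) ^ 2 = 3 := by norm_cast; exact Real.sq_sqrt (by norm_num)
  unfold ω; linear_combination (I ^ 2 / 4) * h3 + (3 / 4 : ℂ) * I_sq

lemma omega_pow_three : ω ^ 3 = 1 := by
  linear_combination (ω - 1) * omega_sq_add_omega_add_one

lemma eq_omega_or_eq_omega_sq {r : ℂ} (h : r ^ 2 + r + 1 = 0) : r = ω ∨ r = ω ^ 2 := by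
  have : (r - ω) * (r - ω ^ 2) = 0 := by
    linear_combination h - r * omega_sq_add_omega_add_one + omega_pow_three
  rcases mul_eq_zero.1 this with h | h
  · exact .inl (sub_eq_zero.1 h)
  · exact .inr (sub_eq_zero.1 h)

def IsEquilateral {α : Type*} [PseudoMetricSpace α] (a b c : α) : Prop :=
  dist a b = dist b c ∧ dist b c = dist c a

lemma sq_add_self_add_one_eq_zero_of_norm_eq_one {r : ℂ} (h₀ : ‖r‖ = 1) (h₁ : ‖r + 1‖ = 1) :
    r ^ 2 + r + 1 = 0 := by
  have e₀ : r.re * r.re + r.im * r.im = 1 := by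
    rw [← normSq_apply, normSq_eq_norm_sq, h₀, one_pow]
  have e₁ : (r.re + 1) * (r.re + 1) + r.im * r.im = 1 := by
    simpa [normSq_apply, h₁] using normSq_eq_norm_sq (r + 1)
  have hre : 2 * r.re + 1 = 0 := by linarith
  apply Complex.ext <;>
    simp only [sq, add_re, add_im, mul_re, mul_im, one_re, one_im, zero_re, zero_im]
  · linear_combination -e₀ + r.re * hre
  · linear_combination r.im * hre

lemma IsEquilateral.exists_omega_pow_mul {a b c : ℂ} (h : IsEquilateral a b c) (hab : a ≠ b) :
    ∃ k : ℕ, c - b = ω ^ k * (b - a) := by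
  have hba : b - a ≠ 0 := sub_ne_zero.2 hab.symm
  set r := (c - b) / (b - a)
  have hr : r ^ 2 + r + 1 = 0 := by
    apply sq_add_self_add_one_eq_zero_of_norm_eq_one
    · rw [norm_div, div_eq_one_iff_eq (norm_ne_zero_iff.2 hba), ← dist_eq, ← dist_eq,
        dist_comm c, dist_comm b a, h.1]
    · rw [div_add_one hba, sub_add_sub_cancel, norm_div, div_eq_one_iff_eq (norm_ne_zero_iff.2 hba),
        ← dist_eq, ← dist_eq, dist_comm b a, h.1, h.2]
  obtain ⟨k, hk⟩ : ∃ k : ℕ, r = ω ^ k :=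
    (eq_omega_or_eq_omega_sq hr).elim (fun h => ⟨1, by rw [h, pow_one]⟩) (fun h => ⟨2, h⟩)
  exact ⟨k, by rw [← hk, div_mul_cancel₀ _ hba]⟩

lemma exists_int_re_add_sqrt_three_mul_im_omega_pow (n : ℕ) :
    ∃ m : ℤ, (ω ^ n).re + √3 * (ω ^ n).im = 1 - 3 * m := by
  have h3 : √3 * √3 = 3 := Real.mul_self_sqrt (by norm_num)
  rw [pow_eq_pow_mod n omega_pow_three]
  have : n % 3 < 3 := Nat.mod_lt _ (by norm_num)
  interval_cases n % 3
  · exact ⟨0, by simp⟩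
  · exact ⟨0, by rw [pow_one, omega_re, omega_im]; push_cast; linarith⟩
  · refine ⟨1, ?_⟩
    rw [show ω ^ 2 = -1 - ω by linear_combination omega_sq_add_omega_add_one, sub_re, sub_im,
      neg_re, neg_im, one_re, one_im, omega_re, omega_im]
    push_cast; linarith

lemma three_dvd_card_of_sum_omega_pow_eq_zero {ι : Type*} {s : Finset ι} {x : ι → ℂ}
    (hx : ∀ i ∈ s, ∃ k : ℕ, x i = ω ^ k) (h : ∑ i ∈ s, x i = 0) : 3 ∣ s.card := by
  let L : ℂ → ℝ := fun z => z.re + √3 * z.im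
  have hL : ∑ i ∈ s, L (x i) = 0 := by
    simp only [L, Finset.sum_add_distrib, ← Finset.mul_sum, ← re_sum, ← im_sum, h, zero_re,
      zero_im, mul_zero, add_zero]
  obtain ⟨m, hm : m • (3 : ℝ) = s.card⟩ : (s.card : ℝ) ∈ AddSubgroup.zmultiples (3 : ℝ) := by
    rw [← sub_zero (s.card : ℝ), ← hL, ← nsmul_one, ← Finset.sum_const, ← Finset.sum_sub_distrib]
    refine AddSubgroup.sum_mem _ fun i hi => ?_
    obtain ⟨k, hk⟩ := hx i hi
    obtain ⟨m, hm⟩ := exists_int_re_add_sqrt_three_mul_im_omega_pow k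
    exact ⟨m, by simp only [L, hk, hm, zsmul_eq_mul]; ring⟩
  rw [zsmul_eq_mul] at hm
  exact Int.natCast_dvd_natCast.mp ⟨m, by exact_mod_cast hm.symm.trans (mul_comm _ _)⟩

lemma sum_range_sub_mod_eq_zero {G : Type*} [AddCommGroup G] (f : ℕ → G) (n : ℕ) :
    ∑ i ∈ Finset.range n, (f ((i + 1) % n) - f i) = 0 := by
  cases n with
  | zero => simp
  | succ n =>
    have hlt : ∀ i ∈ Finset.range n, f ((i + 1) % (n + 1)) - f i = f (i + 1) - f i := fun i hi => by
      rw [Nat.mod_eq_of_lt (by simpa using hi)]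
    rw [Finset.sum_range_succ, Finset.sum_congr rfl hlt, Finset.sum_range_sub, Nat.mod_self]
    abel

theorem three_dvd_of_injOn_of_isEquilateral {ℓ : ℕ} (hℓ : 2 ≤ ℓ) {w : ℕ → ℂ}
    (hw : Set.InjOn w (Set.Iio ℓ))
    (hequi : ∀ i, i + 2 ≤ ℓ → IsEquilateral (w i) (w ((i + 1) % ℓ)) (w ((i + 2) % ℓ))) :
    3 ∣ ℓ := by
  set z : ℕ → ℂ := fun i => w ((i + 1) % ℓ) - w i with hz
  have hz_ne : ∀ i < ℓ, z i ≠ 0 := fun i hi h => by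
    have := hw (Nat.mod_lt _ (by omega)) hi (sub_eq_zero.1 h)
    rcases Nat.lt_or_ge (i + 1) ℓ with h | h
    · rw [Nat.mod_eq_of_lt h] at this; omega
    · rw [show i + 1 = ℓ by omega, Nat.mod_self] at this; omega
  have hz_succ : ∀ i, i + 2 ≤ ℓ → ∃ k : ℕ, z (i + 1) = ω ^ k * z i := fun i hi => by
    have hi₁ : (i + 1) % ℓ = i + 1 := Nat.mod_eq_of_lt (by omega)
    have hequi := hequi i hi
    rw [hi₁] at hequi
    simp only [hz, hi₁]
    exact hequi.exists_omega_pow_mul fun h =>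
      absurd (hw (Set.mem_Iio.2 (by omega)) (Set.mem_Iio.2 (by omega)) h) (by omega)
  have hz_pow : ∀ i < ℓ, ∃ k : ℕ, z i = ω ^ k * z 0 := by
    intro i
    induction i with
    | zero => exact fun _ => ⟨0, by rw [pow_zero, one_mul]⟩
    | succ i ih =>
      intro hi
      obtain ⟨k, hk⟩ := ih (by omega)
      obtain ⟨k', hk'⟩ := hz_succ i (by omega)
      exact ⟨k' + k, by rw [hk', hk, pow_add, mul_assoc]⟩
  simpa only [Finset.card_range] using
    three_dvd_card_of_sum_omega_pow_eq_zero (s := Finset.range ℓ) (x := fun i => z i / z 0)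
    (fun i hi => (hz_pow i (Finset.mem_range.1 hi)).imp fun k hk => by
      rw [hk, mul_div_cancel_right₀ _ (hz_ne 0 (by omega))])
    (by rw [← Finset.sum_div, sum_range_sub_mod_eq_zero, zero_div])

/-- For every finite planar point set `P` and every `ℓ ≥ 4` with `3 ∤ ℓ`, the 3-graph
on `P` whose hyperedges are the equilateral triangles spanned by `P` contains no copy of
`C_ℓ⁻` (the tight cycle on `ℓ` vertices minus one hyperedge): there is no injective
sequence `v₀, …, v_{ℓ-1}` of points of `P` such that for every `0 ≤ i ≤ ℓ-2` the three
points `v_i, v_{i+1 mod ℓ}, v_{i+2 mod ℓ}` form an equilateral triangle. -/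
theorem stmt12 (P : Finset (EuclideanSpace ℝ (Fin 2))) (ℓ : ℕ) (hℓ : 4 ≤ ℓ)
    (h3 : ¬ 3 ∣ ℓ) :
    ¬ ∃ v : ℕ → EuclideanSpace ℝ (Fin 2),
        (∀ i, i < ℓ → v i ∈ P) ∧
        (∀ i j, i < ℓ → j < ℓ → v i = v j → i = j) ∧
        (∀ i, i + 2 ≤ ℓ →
          dist (v i) (v ((i + 1) % ℓ)) = dist (v ((i + 1) % ℓ)) (v ((i + 2) % ℓ)) ∧
          dist (v ((i + 1) % ℓ)) (v ((i + 2) % ℓ)) = dist (v ((i + 2) % ℓ)) (v i)) := by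
  rintro ⟨v, -, hv, hequi⟩
  let e := orthonormalBasisOneI.repr.symm
  refine h3 (three_dvd_of_injOn_of_isEquilateral (by omega) (w := e ∘ v)
    (fun i hi j hj h => hv i j hi hj (e.injective h)) fun i hi => ?_)
  simpa only [IsEquilateral, Function.comp_apply, e.dist_map] using hequi i hi
end

section
/- Color the triangular lattice P₀ = {x·(1,0) + y·(1/2, √3/2) : x, y ∈ ℤ} with three colors by assigning to the point x·v₁ + y·v₂ the color (x + 2y) mod 3. Then every equilateral triangle with side length 1 whose vertices lie in P₀ has all three vertices of distinct colors. -/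
/-!
In lattice coordinates the squared distance between two points of the triangular lattice is the
Eisenstein norm `a² + ab + b²` of their difference `(a, b)`, and `4(a² + ab + b²) = (a + 2b)² + 3a²`.
If the two endpoints of a unit segment had the same color, then `3 ∣ a + 2b`, and the identity
would make `4` divisible by `3`.
-/

lemma Int.emod_three_ne_zero_of_sq_add_mul_add_sq_eq_one {a b : ℤ}
    (h : a ^ 2 + a * b + b ^ 2 = 1) : (a + 2 * b) % 3 ≠ 0 := by
  intro hdvd
  obtain ⟨k, hk⟩ : 3 ∣ a + 2 * b := Int.dvd_of_emod_eq_zero hdvd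
  have : 3 * (3 * k ^ 2 + a ^ 2) = 4 := by
    linear_combination 4 * h - (a + 2 * b + 3 * k) * hk
  omega

lemma triangularLattice_sq_dist (a b : ℝ) :
    (a + b / 2) ^ 2 + (b * √3 / 2) ^ 2 = a ^ 2 + a * b + b ^ 2 := by
  linear_combination (b ^ 2 / 4) * Real.sq_sqrt (show (0 : ℝ) ≤ 3 by norm_num)

lemma triangularLattice_color_ne_of_dist_eq_one {x y x' y' : ℤ}
    (h : ((x : ℝ) + (y : ℝ) / 2 - ((x' : ℝ) + (y' : ℝ) / 2)) ^ 2
        + ((y : ℝ) * √3 / 2 - (y' : ℝ) * √3 / 2) ^ 2 = 1) :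
    (x + 2 * y) % 3 ≠ (x' + 2 * y') % 3 := by
  have hnorm : (x - x') ^ 2 + (x - x') * (y - y') + (y - y') ^ 2 = 1 := by
    have := triangularLattice_sq_dist (x - x') (y - y')
    exact_mod_cast (by linear_combination h - this :
      ((x : ℝ) - x') ^ 2 + (x - x') * (y - y') + (y - y') ^ 2 = 1)
  have := Int.emod_three_ne_zero_of_sq_add_mul_add_sq_eq_one hnorm
  omega

/-- Color the point `x·(1,0) + y·(1/2, √3/2)` of the triangular lattice with color
`(x + 2y) mod 3`. Every equilateral triangle of side length `1` with vertices in the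
lattice is rainbow: here the point with lattice coordinates `(x, y)` is
`(x + y/2, y·√3/2) ∈ ℝ²`, and pairwise (Euclidean) distances are `1`. -/
theorem stmt13 (x₁ y₁ x₂ y₂ x₃ y₃ : ℤ)
    (h12 : ((x₁ : ℝ) + (y₁ : ℝ) / 2 - ((x₂ : ℝ) + (y₂ : ℝ) / 2)) ^ 2
        + ((y₁ : ℝ) * Real.sqrt 3 / 2 - (y₂ : ℝ) * Real.sqrt 3 / 2) ^ 2 = 1)
    (h23 : ((x₂ : ℝ) + (y₂ : ℝ) / 2 - ((x₃ : ℝ) + (y₃ : ℝ) / 2)) ^ 2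
        + ((y₂ : ℝ) * Real.sqrt 3 / 2 - (y₃ : ℝ) * Real.sqrt 3 / 2) ^ 2 = 1)
    (h13 : ((x₁ : ℝ) + (y₁ : ℝ) / 2 - ((x₃ : ℝ) + (y₃ : ℝ) / 2)) ^ 2
        + ((y₁ : ℝ) * Real.sqrt 3 / 2 - (y₃ : ℝ) * Real.sqrt 3 / 2) ^ 2 = 1) :
    (x₁ + 2 * y₁) % 3 ≠ (x₂ + 2 * y₂) % 3 ∧
    (x₂ + 2 * y₂) % 3 ≠ (x₃ + 2 * y₃) % 3 ∧
    (x₁ + 2 * y₁) % 3 ≠ (x₃ + 2 * y₃) % 3 :=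
  ⟨triangularLattice_color_ne_of_dist_eq_one h12, triangularLattice_color_ne_of_dist_eq_one h23,
    triangularLattice_color_ne_of_dist_eq_one h13⟩
end

section
/- Let ℓ₁, ℓ₂ ≥ 4 be integers with ℓ₁ ≥ 2ℓ₂ - 3 and 3 ∤ ℓ₂. Then there exists a positive integer t such that the t-blow-up of C_{ℓ₂}⁻ contains C_{ℓ₁}⁻ as a subhypergraph. -/
/-!
A map `w` on `{0, …, m}` with `w m = w 0` whose consecutive triples are hyperedges of `C_ℓ⁻`
is a homomorphism `C_m⁻ → C_ℓ⁻`; sending `i` to `(w i, i)` turns it into an injective copy of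
`C_m⁻` in the `m`-blow-up of `C_ℓ⁻`. Such closed walks exist for `m = 3` (around the hyperedge
`{0, 1, 2}`), `m = ℓ` (once around the cycle) and `m = 2ℓ - 3` (the zigzag
`0, 2, 1, 3, 2, 4, …, ℓ - 1, ℓ - 2, 0`), and winding around the first hyperedge lengthens a
closed walk by any multiple of `3`. When `3 ∤ ℓ` the lengths `3`, `ℓ`, `2ℓ - 3` cover all three
residues mod `3`, so every `m ≥ 2ℓ - 3` is reached.
-/

namespace TightCycleMinus

def IsEdge (ℓ : ℕ) (e : Finset ℕ) : Prop :=
  ∃ j, j + 2 ≤ ℓ ∧ e = {j, (j + 1) % ℓ, (j + 2) % ℓ}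

lemma isEdge_mod {ℓ a : ℕ} (h : a + 2 ≤ ℓ) : IsEdge ℓ {a % ℓ, (a + 1) % ℓ, (a + 2) % ℓ} :=
  ⟨a, h, by rw [Nat.mod_eq_of_lt (by omega : a < ℓ)]⟩

def IsClosedWalk (ℓ m : ℕ) (w : ℕ → ℕ) : Prop :=
  w m = w 0 ∧ (∀ k < m, w k < ℓ) ∧ ∀ k, k + 2 ≤ m → IsEdge ℓ {w k, w (k + 1), w (k + 2)}

lemma isClosedWalk_mod_self (ℓ : ℕ) : IsClosedWalk ℓ ℓ (· % ℓ) :=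
  ⟨by simp, fun k hk => Nat.mod_lt k (by omega), fun _ hk => isEdge_mod hk⟩

lemma isClosedWalk_mod_three {ℓ : ℕ} (hℓ : 3 ≤ ℓ) : IsClosedWalk ℓ 3 (· % 3) := by
  refine ⟨rfl, fun k _ => by change k % 3 < ℓ; omega, fun k hk => ⟨0, by omega, ?_⟩⟩
  have h1 : 1 % ℓ = 1 := Nat.mod_eq_of_lt (by omega)
  have h2 : 2 % ℓ = 2 := Nat.mod_eq_of_lt (by omega)
  obtain rfl | rfl : k = 0 ∨ k = 1 := by omega
  · simp [h1, h2]
  · show ({1, 2, 0} : Finset ℕ) = {0, 1 % ℓ, 2 % ℓ}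
    rw [h1, h2, Finset.pair_comm 2 0, Finset.insert_comm 1 0]

def zigzag (k : ℕ) : ℕ := k / 2 + 2 * (k % 2)

lemma isClosedWalk_zigzag (ℓ : ℕ) : IsClosedWalk ℓ (2 * ℓ - 3) (zigzag · % ℓ) := by
  refine ⟨?_, fun k hk => Nat.mod_lt _ (by omega), fun k hk => ?_⟩
  · show zigzag (2 * ℓ - 3) % ℓ = zigzag 0 % ℓ
    by_cases hℓ : 2 ≤ ℓ
    · have h : zigzag (2 * ℓ - 3) = ℓ := by unfold zigzag; omega
      rw [h, Nat.mod_self]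
      rfl
    · rw [show 2 * ℓ - 3 = 0 by omega]
  · obtain ⟨m, rfl | rfl⟩ := Nat.even_or_odd' k
    · have h0 : zigzag (2 * m) = m := by unfold zigzag; omega
      have h1 : zigzag (2 * m + 1) = m + 2 := by unfold zigzag; omega
      have h2 : zigzag (2 * m + 2) = m + 1 := by unfold zigzag; omega
      dsimp only
      rw [h0, h1, h2, Finset.pair_comm]
      exact isEdge_mod (by omega)
    · have h0 : zigzag (2 * m + 1) = m + 2 := by unfold zigzag; omega
      have h1 : zigzag (2 * m + 1 + 1) = m + 1 := by unfold zigzag; omega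
      have h2 : zigzag (2 * m + 1 + 2) = m + 1 + 2 := by unfold zigzag; omega
      dsimp only
      rw [h0, h1, h2, Finset.insert_comm]
      exact isEdge_mod (by omega)

lemma triple_mod_three (f : ℕ → ℕ) (k : ℕ) :
    ({f (k % 3), f ((k + 1) % 3), f ((k + 2) % 3)} : Finset ℕ) = {f 0, f 1, f 2} := by
  obtain h | h | h : k % 3 = 0 ∨ k % 3 = 1 ∨ k % 3 = 2 := by omega
  · rw [h, show (k + 1) % 3 = 1 by omega, show (k + 2) % 3 = 2 by omega]
  · rw [h, show (k + 1) % 3 = 2 by omega, show (k + 2) % 3 = 0 by omega]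
    ext; simp only [Finset.mem_insert, Finset.mem_singleton]; tauto
  · rw [h, show (k + 1) % 3 = 0 by omega, show (k + 2) % 3 = 1 by omega]
    ext; simp only [Finset.mem_insert, Finset.mem_singleton]; tauto

def prependTriangles (s : ℕ) (w : ℕ → ℕ) (k : ℕ) : ℕ :=
  if k < 3 * s then w (k % 3) else w (k - 3 * s)

lemma prependTriangles_of_ge {s k : ℕ} (w : ℕ → ℕ) (hk : 3 * s ≤ k) :
    prependTriangles s w k = w (k - 3 * s) :=
  if_neg (not_lt.2 hk)

lemma prependTriangles_of_lt {s k : ℕ} (w : ℕ → ℕ) (hk : k < 3 * s + 3) :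
    prependTriangles s w k = w (k % 3) := by
  unfold prependTriangles
  split_ifs
  · rfl
  · rw [show k - 3 * s = k % 3 by omega]

lemma IsClosedWalk.prependTriangles {ℓ m : ℕ} {w : ℕ → ℕ} (hw : IsClosedWalk ℓ m w)
    (hm : 3 ≤ m) (s : ℕ) : IsClosedWalk ℓ (3 * s + m) (prependTriangles s w) := by
  obtain ⟨hclosed, hlt, hedge⟩ := hw
  refine ⟨?_, fun k hk => ?_, fun k hk => ?_⟩
  · rw [prependTriangles_of_ge w (by omega), prependTriangles_of_lt w (by omega),
      Nat.add_sub_cancel_left, hclosed]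
  · by_cases h : k < 3 * s
    · rw [prependTriangles_of_lt w (by omega)]
      exact hlt _ (by omega)
    · rw [prependTriangles_of_ge w (by omega)]
      exact hlt _ (by omega)
  · by_cases h : k < 3 * s
    · rw [prependTriangles_of_lt w (by omega), prependTriangles_of_lt w (by omega),
        prependTriangles_of_lt w (by omega), triple_mod_three]
      exact hedge 0 (by omega)
    · rw [prependTriangles_of_ge w (by omega), prependTriangles_of_ge w (by omega),
        prependTriangles_of_ge w (by omega), show k + 1 - 3 * s = k - 3 * s + 1 by omega,
        show k + 2 - 3 * s = k - 3 * s + 2 by omega]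
      exact hedge _ (by omega)

lemma IsClosedWalk.exists_of_mod_eq {ℓ m n : ℕ} {w : ℕ → ℕ} (hw : IsClosedWalk ℓ m w)
    (hm : 3 ≤ m) (hmn : m ≤ n) (hmod : n % 3 = m % 3) : ∃ w', IsClosedWalk ℓ n w' := by
  obtain ⟨s, rfl⟩ : ∃ s, n = 3 * s + m := ⟨(n - m) / 3, by omega⟩
  exact ⟨_, hw.prependTriangles hm s⟩

lemma IsClosedWalk.exists_blowup_embedding {ℓ₁ ℓ₂ : ℕ} {w : ℕ → ℕ}
    (hw : IsClosedWalk ℓ₂ ℓ₁ w) (hℓ₁ : 0 < ℓ₁) :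
    ∃ t : ℕ, 0 < t ∧ ∃ f : ℕ → ℕ × ℕ,
      (∀ i, i < ℓ₁ → (f i).1 < ℓ₂ ∧ (f i).2 < t) ∧
      (∀ i j, i < ℓ₁ → j < ℓ₁ → f i = f j → i = j) ∧
      (∀ i, i + 2 ≤ ℓ₁ → ∃ j, j + 2 ≤ ℓ₂ ∧
        ({(f i).1, (f ((i + 1) % ℓ₁)).1, (f ((i + 2) % ℓ₁)).1} : Finset ℕ)
          = ({j, (j + 1) % ℓ₂, (j + 2) % ℓ₂} : Finset ℕ)) := by
  obtain ⟨hclosed, hlt, hedge⟩ := hw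
  refine ⟨ℓ₁, hℓ₁, fun i => (w i, i), fun i hi => ⟨hlt i hi, hi⟩,
    fun i j _ _ h => congrArg Prod.snd h, fun i hi => ?_⟩
  have h1 : (i + 1) % ℓ₁ = i + 1 := Nat.mod_eq_of_lt (by omega)
  have h2 : w ((i + 2) % ℓ₁) = w (i + 2) := by
    rcases hi.lt_or_eq with h | h
    · rw [Nat.mod_eq_of_lt h]
    · rw [h, Nat.mod_self, hclosed]
  dsimp only
  rw [h1, h2]
  exact hedge i hi

end TightCycleMinus

open TightCycleMinus

theorem stmt14_general (ℓ₁ ℓ₂ : ℕ) (h2 : 4 ≤ ℓ₂)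
    (hge : 2 * ℓ₂ - 3 ≤ ℓ₁) (h3 : ¬ 3 ∣ ℓ₂) :
    ∃ t : ℕ, 0 < t ∧ ∃ f : ℕ → ℕ × ℕ,
      (∀ i, i < ℓ₁ → (f i).1 < ℓ₂ ∧ (f i).2 < t) ∧
      (∀ i j, i < ℓ₁ → j < ℓ₁ → f i = f j → i = j) ∧
      (∀ i, i + 2 ≤ ℓ₁ → ∃ j, j + 2 ≤ ℓ₂ ∧
        ({(f i).1, (f ((i + 1) % ℓ₁)).1, (f ((i + 2) % ℓ₁)).1} : Finset ℕ)
          = ({j, (j + 1) % ℓ₂, (j + 2) % ℓ₂} : Finset ℕ)) := by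
  obtain ⟨w, hw⟩ : ∃ w, IsClosedWalk ℓ₂ ℓ₁ w := by
    obtain h | h | h : ℓ₁ % 3 = 3 % 3 ∨ ℓ₁ % 3 = ℓ₂ % 3 ∨ ℓ₁ % 3 = (2 * ℓ₂ - 3) % 3 := by
      obtain h | h : ℓ₂ % 3 = 1 ∨ ℓ₂ % 3 = 2 := by omega
      all_goals omega
    · exact (isClosedWalk_mod_three (by omega)).exists_of_mod_eq le_rfl (by omega) h
    · exact (isClosedWalk_mod_self ℓ₂).exists_of_mod_eq (by omega) (by omega) h
    · exact (isClosedWalk_zigzag ℓ₂).exists_of_mod_eq (by omega) hge h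
  exact hw.exists_blowup_embedding (by omega)

/-- Claim 5.7: for `ℓ₁, ℓ₂ ≥ 4` with `ℓ₁ ≥ 2ℓ₂ - 3` and `3 ∤ ℓ₂`, some `t`-blow-up of
`C_{ℓ₂}⁻` contains `C_{ℓ₁}⁻`. Vertices of `C_ℓ⁻` are `{0,…,ℓ-1}` and its hyperedges
are `{i, (i+1) mod ℓ, (i+2) mod ℓ}` for `0 ≤ i ≤ ℓ-2`; a vertex of the blow-up is a
pair (vertex, copy index), and a copy of `C_{ℓ₁}⁻` is an injective map `f` sending
each hyperedge of `C_{ℓ₁}⁻` to a blow-up of a hyperedge of `C_{ℓ₂}⁻`. -/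
theorem stmt14 (ℓ₁ ℓ₂ : ℕ) (h1 : 4 ≤ ℓ₁) (h2 : 4 ≤ ℓ₂)
    (hge : 2 * ℓ₂ - 3 ≤ ℓ₁) (h3 : ¬ 3 ∣ ℓ₂) :
    ∃ t : ℕ, 0 < t ∧ ∃ f : ℕ → ℕ × ℕ,
      (∀ i, i < ℓ₁ → (f i).1 < ℓ₂ ∧ (f i).2 < t) ∧
      (∀ i j, i < ℓ₁ → j < ℓ₁ → f i = f j → i = j) ∧
      (∀ i, i + 2 ≤ ℓ₁ → ∃ j, j + 2 ≤ ℓ₂ ∧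
        ({(f i).1, (f ((i + 1) % ℓ₁)).1, (f ((i + 2) % ℓ₁)).1} : Finset ℕ)
          = ({j, (j + 1) % ℓ₂, (j + 2) % ℓ₂} : Finset ℕ)) :=
  stmt14_general ℓ₁ ℓ₂ h2 hge h3
end

section
/- For every ε₁, ε₂ with ε₁/24 > ε₂ > 0, there exist δ > ε₁²(ε₁ - 24ε₂)/24³ and N such that for every tournament T on n > N vertices with at least (1/24 - δ)n³ cyclic triangles, the number of vertex pairs {u,v} contained in at most ε₂n cyclic triangles of T is less than ε₁n². -/
open scoped Classical

/-!
Counting the non-cyclic triples by their source vertex gives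
`#cyclic + ∑ v, (d⁺ v).choose 2 ≤ n.choose 3`, that is
`#cyclic ≤ n³/24 - ∑ v, (d⁺ v - (n-1)/2)² / 2`. So nearly `n³/24` cyclic triangles force all but
few vertices to have out-degree within `ε₁n/24` of `(n-1)/2`. If `a → b` lies in few cyclic
triangles, almost every out-neighbour of `b` is one of `a`; when both degrees are balanced, the
out-neighbourhoods of `a` and `b` are then nearly equal. Too many such pairs produce a vertex `u`
with many partners `S`, all with out-neighbourhoods close to that of `u`. But some `v ∈ S` beats
half of `S`, and some `w` among those is beaten by half of them, so the out-neighbourhoods of `v`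
and `w` differ in about `#S / 4` vertices.
-/

open Finset

variable {V : Type*} {r : V → V → Prop}

theorem IsTournament.ne_of_rel_s18 (hT : IsTournament r) {a b : V} (h : r a b) : a ≠ b := by
  rintro rfl
  exact hT.1 a h

theorem IsTournament.not_rel_of_rel (hT : IsTournament r) {a b : V} (h : r a b) : ¬ r b a :=
  (hT.2 a b (hT.ne_of_rel_s18 h)).1 h

theorem IsTournament.rel_or_rel_iff_ne (hT : IsTournament r) {a b : V} :
    r a b ∨ r b a ↔ a ≠ b := by
  refine ⟨?_, fun hab => or_iff_not_imp_right.2 (hT.2 a b hab).2⟩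
  rintro (h | h)
  exacts [hT.ne_of_rel_s18 h, (hT.ne_of_rel_s18 h).symm]

theorem IsTournament.two_mul_sum_card_filter_rel_add_card (hT : IsTournament r)
    (A : Finset V) : 2 * ∑ v ∈ A, #{w ∈ A | r v w} + #A = #A * #A := by
  have hsplit : ∀ v ∈ A, #{w ∈ A | r v w} + #{w ∈ A | r w v} + 1 = #A := by
    intro v hv
    rw [← card_union_of_disjoint (disjoint_filter.2 fun w _ h => hT.not_rel_of_rel h),
      ← filter_or, ← card_erase_add_one hv]
    congr 2
    ext w
    simp only [mem_filter, mem_erase, hT.rel_or_rel_iff_ne]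
    tauto
  have hswap : ∑ v ∈ A, #{w ∈ A | r w v} = ∑ v ∈ A, #{w ∈ A | r v w} :=
    sum_card_bipartiteAbove_eq_sum_card_bipartiteBelow (fun v w => r w v)
  calc 2 * ∑ v ∈ A, #{w ∈ A | r v w} + #A
      = ∑ v ∈ A, (#{w ∈ A | r v w} + #{w ∈ A | r w v} + 1) := by
        rw [sum_add_distrib, sum_add_distrib, hswap, sum_const, smul_eq_mul, mul_one, two_mul]
    _ = #A * #A := by rw [sum_congr rfl hsplit, sum_const, smul_eq_mul]

theorem IsTournament.exists_card_le_two_mul_card_filter_rel_add_one (hT : IsTournament r)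
    {A : Finset V} (hA : A.Nonempty) : ∃ v ∈ A, #A ≤ 2 * #{w ∈ A | r v w} + 1 := by
  refine exists_le_of_sum_le hA ?_
  rw [sum_add_distrib, ← mul_sum, sum_const, sum_const, smul_eq_mul, smul_eq_mul, mul_one,
    hT.two_mul_sum_card_filter_rel_add_card]

theorem IsTournament.exists_two_mul_card_filter_rel_add_one_le (hT : IsTournament r)
    {A : Finset V} (hA : A.Nonempty) : ∃ v ∈ A, 2 * #{w ∈ A | r v w} + 1 ≤ #A := by
  refine exists_le_of_sum_le hA ?_
  rw [sum_add_distrib, ← mul_sum, sum_const, sum_const, smul_eq_mul, smul_eq_mul, mul_one,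
    hT.two_mul_sum_card_filter_rel_add_card]

noncomputable def outNbhd [Fintype V] (r : V → V → Prop) (v : V) : Finset V := {w | r v w}

theorem IsTournament.insert_notMem_cyclicTriangles {n : ℕ} {r : Fin n → Fin n → Prop}
    (hT : IsTournament r) {v : Fin n} {e : Finset (Fin n)} (hv : ∀ w ∈ e, r v w)
    (he : #e = 2) : insert v e ∉ cyclicTriangles n r := by
  have hin : ∀ x ∈ insert v e, ¬ r x v := by
    rintro x hx hxv
    rcases mem_insert.1 hx with rfl | hx
    exacts [hT.1 x hxv, hT.not_rel_of_rel (hv x hx) hxv]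
  rintro hcyc
  obtain ⟨-, a, b, c, ha, hb, hc, hab, hbc, hca⟩ := mem_filter.1 hcyc
  by_cases hav : a = v
  · exact hin c hc (hav ▸ hca)
  by_cases hbv : b = v
  · exact hin a ha (hbv ▸ hab)
  by_cases hcv : c = v
  · exact hin b hb (hcv ▸ hbc)
  have habc : ({a, b, c} : Finset (Fin n)) ⊆ e := by
    simp only [insert_subset_iff, singleton_subset_iff]
    exact ⟨(mem_insert.1 ha).resolve_left hav, (mem_insert.1 hb).resolve_left hbv,
      (mem_insert.1 hc).resolve_left hcv⟩
  have h3 : #({a, b, c} : Finset (Fin n)) = 3 :=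
    card_eq_three.2 ⟨a, b, c, hT.ne_of_rel_s18 hab, (hT.ne_of_rel_s18 hca).symm, hT.ne_of_rel_s18 hbc, rfl⟩
  have := card_le_card habc
  omega

theorem IsTournament.eq_of_insert_eq_insert [DecidableEq V] (hT : IsTournament r) {v v' : V}
    {e e' : Finset V} (hv : ∀ w ∈ e, r v w) (hv' : ∀ w ∈ e', r v' w)
    (h : insert v e = insert v' e') : v = v' ∧ e = e' := by
  have hvv' : v = v' := by
    by_contra hne
    have hve' : v ∈ e' := (mem_insert.1 (h ▸ mem_insert_self v e)).resolve_left hne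
    have hv'e : v' ∈ e := (mem_insert.1 (h ▸ mem_insert_self v' e')).resolve_left (Ne.symm hne)
    exact hT.not_rel_of_rel (hv v' hv'e) (hv' v hve')
  subst hvv'
  refine ⟨rfl, ?_⟩
  rw [← erase_insert fun hmem => hT.1 v (hv v hmem), h,
    erase_insert fun hmem => hT.1 v (hv' v hmem)]

theorem IsTournament.card_cyclicTriangles_add_sum_choose_two_le {n : ℕ}
    {r : Fin n → Fin n → Prop} (hT : IsTournament r) :
    #(cyclicTriangles n r) + ∑ v, (#(outNbhd r v)).choose 2 ≤ n.choose 3 := by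
  set T := (univ : Finset (Fin n)).sigma fun v => powersetCard 2 (outNbhd r v)
  have hdom : ∀ p ∈ T, ∀ w ∈ p.2, r p.1 w := fun p hp w hw => by
    simpa [outNbhd] using (mem_powersetCard.1 (mem_sigma.1 hp).2).1 hw
  have hmaps : Set.MapsTo (fun p : Σ _ : Fin n, Finset (Fin n) => insert p.1 p.2) T
      (powersetCard 3 univ \ cyclicTriangles n r : Finset (Finset (Fin n))) := by
    intro p hp
    have he : #p.2 = 2 := (mem_powersetCard.1 (mem_sigma.1 hp).2).2
    refine mem_sdiff.2 ⟨mem_powersetCard.2 ⟨subset_univ _, ?_⟩,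
      hT.insert_notMem_cyclicTriangles (hdom p hp) he⟩
    rw [card_insert_of_notMem fun hmem => hT.1 _ (hdom p hp _ hmem), he]
  have hinj : Set.InjOn (fun p : Σ _ : Fin n, Finset (Fin n) => insert p.1 p.2) T := by
    rintro ⟨v, e⟩ hp ⟨v', e'⟩ hp' h
    simp only at h
    obtain ⟨rfl, rfl⟩ := hT.eq_of_insert_eq_insert (hdom _ hp) (hdom _ hp') h
    rfl
  have hcard := card_le_card_of_injOn _ hmaps hinj
  have hsub : cyclicTriangles n r ⊆ powersetCard 3 univ := filter_subset _ _
  have hC := card_le_card hsub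
  rw [card_sdiff_of_subset hsub, card_sigma] at hcard
  simp only [card_powersetCard, card_univ, Fintype.card_fin] at hcard hC
  omega

theorem Nat.cast_choose_three (K : Type*) [Field K] [CharZero K] (n : ℕ) :
    (n.choose 3 : K) = n * (n - 1) * (n - 2) / 6 := by
  induction n with
  | zero => simp
  | succ n ih =>
    rw [Nat.choose_succ_succ', Nat.cast_add, ih, Nat.cast_choose_two]
    push_cast
    ring

theorem IsTournament.card_cyclicTriangles_le {n : ℕ} {r : Fin n → Fin n → Prop}
    (hT : IsTournament r) :
    (#(cyclicTriangles n r) : ℝ)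
      ≤ n ^ 3 / 24 - (∑ v, ((#(outNbhd r v) : ℝ) - (n - 1) / 2) ^ 2) / 2 := by
  have hcount : (#(cyclicTriangles n r) : ℝ) + ∑ v, ((#(outNbhd r v)).choose 2 : ℝ)
      ≤ n.choose 3 := by exact_mod_cast hT.card_cyclicTriangles_add_sum_choose_two_le
  have hsum : 2 * ∑ v, (#(outNbhd r v) : ℝ) + n = n * n := by
    have h := hT.two_mul_sum_card_filter_rel_add_card (univ : Finset (Fin n))
    rw [card_univ, Fintype.card_fin] at h
    exact_mod_cast h
  -- the squares of the out-degrees cancel against the binomial coefficients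
  have hsq : ∑ v, ((#(outNbhd r v) : ℝ) - (n - 1) / 2) ^ 2
      = ∑ v, (2 * ((#(outNbhd r v)).choose 2 : ℝ) + (2 - n) * #(outNbhd r v)
          + ((n - 1) / 2) ^ 2) :=
    sum_congr rfl fun v _ => by rw [Nat.cast_choose_two]; ring
  rw [hsq, sum_add_distrib, sum_add_distrib, ← mul_sum, ← mul_sum, sum_const, card_univ,
    Fintype.card_fin, nsmul_eq_mul]
  rw [Nat.cast_choose_three ℝ] at hcount
  nlinarith

theorem card_filter_lt_abs_mul_sq_le_sum_sq {ι : Type*} (s : Finset ι) (f : ι → ℝ) {t : ℝ}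
    (ht : 0 ≤ t) : #{i ∈ s | t < |f i|} * t ^ 2 ≤ ∑ i ∈ s, f i ^ 2 :=
  calc #{i ∈ s | t < |f i|} * t ^ 2 = ∑ i ∈ s with t < |f i|, t ^ 2 := by
        rw [sum_const, nsmul_eq_mul]
    _ ≤ ∑ i ∈ s with t < |f i|, f i ^ 2 :=
        sum_le_sum fun i hi => by
          rw [← sq_abs (f i)]
          exact pow_le_pow_left₀ ht (mem_filter.1 hi).2.le 2
    _ ≤ ∑ i ∈ s, f i ^ 2 := sum_le_sum_of_subset_of_nonneg (filter_subset _ _)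
        fun i _ _ => sq_nonneg (f i)

theorem IsTournament.card_filter_lt_abs_mul_sq_le {n : ℕ} {r : Fin n → Fin n → Prop}
    (hT : IsTournament r) {δ t : ℝ} (ht : 0 ≤ t)
    (hcyc : (1 / 24 - δ) * n ^ 3 ≤ #(cyclicTriangles n r)) :
    #{v | t < |(#(outNbhd r v) : ℝ) - (n - 1) / 2|} * t ^ 2 ≤ 2 * δ * n ^ 3 := by
  have := card_filter_lt_abs_mul_sq_le_sum_sq univ
    (fun v => (#(outNbhd r v) : ℝ) - (n - 1) / 2) ht
  linarith [hT.card_cyclicTriangles_le]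

section PairFamilies

variable [Fintype V] [DecidableEq V] {F : Finset (Finset V)}

theorem card_filter_mem_le_card_filter_pair_mem (hF : ∀ s ∈ F, #s = 2) (u : V) :
    #{s ∈ F | u ∈ s} ≤ #{v | {u, v} ∈ F} := by
  refine le_trans (card_le_card fun s hs => ?_) (card_image_le (f := fun v => {u, v}))
  obtain ⟨hsF, hus⟩ := mem_filter.1 hs
  obtain ⟨x, y, -, rfl⟩ := card_eq_two.1 (hF s hsF)
  rw [mem_image]
  rcases mem_insert.1 hus with rfl | hu
  · exact ⟨y, mem_filter.2 ⟨mem_univ _, hsF⟩, rfl⟩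
  · obtain rfl := mem_singleton.1 hu
    rw [pair_comm] at hsF ⊢
    exact ⟨x, mem_filter.2 ⟨mem_univ _, hsF⟩, rfl⟩

theorem exists_two_mul_card_le_card_mul_card_filter_pair_mem [Nonempty V]
    (hF : ∀ s ∈ F, #s = 2) : ∃ u, 2 * #F ≤ Fintype.card V * #{v | {u, v} ∈ F} := by
  have hdeg : ∑ u, #{s ∈ F | u ∈ s} = 2 * #F := by
    rw [mul_comm, ← smul_eq_mul, ← sum_const]
    exact (sum_card_bipartiteAbove_eq_sum_card_bipartiteBelow (· ∈ ·)).trans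
      (sum_congr rfl fun s hs => by simpa [bipartiteBelow] using hF s hs)
  obtain ⟨u, -, hu⟩ := exists_le_of_sum_le (univ_nonempty (α := V))
    (f := fun _ => 2 * #F) (g := fun u => Fintype.card V * #{s ∈ F | u ∈ s}) (by
      rw [sum_const, card_univ, smul_eq_mul, ← mul_sum, hdeg])
  exact ⟨u, hu.trans (Nat.mul_le_mul_left _ (card_filter_mem_le_card_filter_pair_mem hF u))⟩

theorem card_le_card_filter_subset_add_card_compl_mul (hF : ∀ s ∈ F, #s = 2) (A : Finset V) :
    #F ≤ #{s ∈ F | s ⊆ A} + #Aᶜ * Fintype.card V := by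
  have hcover : F ⊆ {s ∈ F | s ⊆ A} ∪ Aᶜ.biUnion fun b => {s ∈ F | b ∈ s} := by
    intro s hs
    by_cases hsA : s ⊆ A
    · exact mem_union_left _ (mem_filter.2 ⟨hs, hsA⟩)
    · obtain ⟨v, hv, hvA⟩ := not_subset.1 hsA
      exact mem_union_right _ (mem_biUnion.2 ⟨v, mem_compl.2 hvA, mem_filter.2 ⟨hs, hv⟩⟩)
  calc #F ≤ #{s ∈ F | s ⊆ A} + ∑ b ∈ Aᶜ, #{s ∈ F | b ∈ s} :=
        (card_le_card hcover).trans ((card_union_le _ _).trans (by gcongr; exact card_biUnion_le))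
    _ ≤ #{s ∈ F | s ⊆ A} + #Aᶜ * Fintype.card V := by
        gcongr
        rw [← smul_eq_mul]
        exact sum_le_card_nsmul _ _ _ fun b _ =>
          (card_filter_mem_le_card_filter_pair_mem hF b).trans (card_le_univ _)

end PairFamilies

noncomputable def cyclicCompleters [Fintype V] [DecidableEq V] (r : V → V → Prop)
    (s : Finset V) : Finset V :=
  {w | ∃ u v, u ∈ s ∧ v ∈ s ∧ u ≠ v ∧ r u v ∧ r v w ∧ r w u}

section OutNeighbourhoods

variable [Fintype V] [DecidableEq V]

theorem IsTournament.card_outNbhd_sdiff_le_card_cyclicCompleters (hT : IsTournament r)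
    {a b : V} (hab : r a b) : #(outNbhd r b \ outNbhd r a) ≤ #(cyclicCompleters r {a, b}) := by
  refine card_le_card fun w hw => ?_
  simp only [outNbhd, cyclicCompleters, mem_sdiff, mem_filter, mem_univ, true_and] at hw ⊢
  have haw : a ≠ w := by
    rintro rfl
    exact hT.not_rel_of_rel hab hw.1
  exact ⟨a, b, mem_insert_self _ _, mem_insert_of_mem (mem_singleton_self _), hT.ne_of_rel_s18 hab,
    hab, hw.1, (hT.rel_or_rel_iff_ne.2 haw).resolve_left hw.2⟩

theorem IsTournament.card_outNbhd_sdiff_le (hT : IsTournament r) {a b : V} (hab : a ≠ b) :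
    (#(outNbhd r a \ outNbhd r b) : ℝ)
      ≤ #(cyclicCompleters r {a, b}) + |(#(outNbhd r a) : ℝ) - #(outNbhd r b)| := by
  rcases hT.rel_or_rel_iff_ne.2 hab with h | h
  · have hba : (#(outNbhd r b \ outNbhd r a) : ℝ) ≤ #(cyclicCompleters r {a, b}) := by
      exact_mod_cast hT.card_outNbhd_sdiff_le_card_cyclicCompleters h
    have hsplit : (#(outNbhd r a \ outNbhd r b) : ℝ) + #(outNbhd r a ∩ outNbhd r b)
        = #(outNbhd r a) := by exact_mod_cast card_sdiff_add_card_inter _ _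
    have hsplit' : (#(outNbhd r b \ outNbhd r a) : ℝ) + #(outNbhd r a ∩ outNbhd r b)
        = #(outNbhd r b) := by rw [inter_comm]; exact_mod_cast card_sdiff_add_card_inter _ _
    linarith [le_abs_self ((#(outNbhd r a) : ℝ) - #(outNbhd r b))]
  · have hab' : (#(outNbhd r a \ outNbhd r b) : ℝ) ≤ #(cyclicCompleters r {a, b}) := by
      rw [pair_comm]
      exact_mod_cast hT.card_outNbhd_sdiff_le_card_cyclicCompleters h
    linarith [abs_nonneg ((#(outNbhd r a) : ℝ) - #(outNbhd r b))]

theorem IsTournament.card_add_one_le_of_card_outNbhd_sdiff_le (hT : IsTournament r)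
    {S : Finset V} (hS : 1 < #S) {K : ℝ}
    (hK : ∀ v ∈ S, ∀ w ∈ S, (#(outNbhd r v \ outNbhd r w) : ℝ) ≤ K) :
    (#S : ℝ) + 1 ≤ 4 * K := by
  obtain ⟨v, hvS, hv⟩ :=
    hT.exists_card_le_two_mul_card_filter_rel_add_one (A := S) (card_pos.1 (by omega))
  set B := {w ∈ S | r v w}
  obtain ⟨w, hwB, hw⟩ :=
    hT.exists_two_mul_card_filter_rel_add_one_le (A := B) (card_pos.1 (by omega))
  have hsub : B \ {z ∈ B | r w z} ⊆ outNbhd r v \ outNbhd r w := fun z hz => by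
    simp only [B, outNbhd, mem_sdiff, mem_filter, mem_univ, true_and] at hz ⊢
    tauto
  have hmiss := card_sdiff_add_card_eq_card (filter_subset (r w ·) B)
  have hK' := (Nat.cast_le.2 (card_le_card hsub)).trans (hK v hvS w (mem_filter.1 hwB).1)
  have hv' : (#S : ℝ) ≤ 2 * #B + 1 := by exact_mod_cast hv
  have hw' : 2 * (#{z ∈ B | r w z} : ℝ) + 1 ≤ #B := by exact_mod_cast hw
  have hmiss' : (#(B \ {z ∈ B | r w z}) : ℝ) + #{z ∈ B | r w z} = #B := by
    exact_mod_cast hmiss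
  linarith

theorem IsTournament.two_mul_card_le_of_card_outNbhd_sdiff_le (hT : IsTournament r)
    {F : Finset (Finset V)} (hF : ∀ s ∈ F, #s = 2) (hF₀ : F.Nonempty) {L : ℝ}
    (hL : ∀ a b, {a, b} ∈ F → (#(outNbhd r a \ outNbhd r b) : ℝ) ≤ L) :
    2 * (#F : ℝ) ≤ Fintype.card V * (8 * L - 1) := by
  obtain ⟨s, hs⟩ := hF₀
  obtain ⟨a, b, hab, rfl⟩ := card_eq_two.1 (hF s hs)
  have hL₁ : 1 ≤ L := by
    have key : ∀ x y, r x y → {x, y} ∈ F → 1 ≤ L := fun x y hxy hxyF =>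
      le_trans (by exact_mod_cast card_pos.2 ⟨y, by simp [outNbhd, hxy, hT.1 y]⟩) (hL x y hxyF)
    rcases hT.rel_or_rel_iff_ne.2 hab with h | h
    · exact key a b h hs
    · exact key b a h (pair_comm a b ▸ hs)
  have : Nonempty V := ⟨a⟩
  obtain ⟨u, hu⟩ := exists_two_mul_card_le_card_mul_card_filter_pair_mem hF
  set S : Finset V := {v | {u, v} ∈ F}
  have hu' : 2 * (#F : ℝ) ≤ Fintype.card V * #S := by exact_mod_cast hu
  have hV : (0 : ℝ) ≤ Fintype.card V := Nat.cast_nonneg _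
  rcases le_or_gt #S 1 with hS | hS
  · have hS' : (#S : ℝ) ≤ 1 := by exact_mod_cast hS
    nlinarith
  have hclose : ∀ v ∈ S, ∀ w ∈ S, (#(outNbhd r v \ outNbhd r w) : ℝ) ≤ 2 * L := by
    intro v hv w hw
    have hv : {u, v} ∈ F := (mem_filter.1 hv).2
    have hw : {u, w} ∈ F := (mem_filter.1 hw).2
    calc (#(outNbhd r v \ outNbhd r w) : ℝ)
        ≤ #(outNbhd r v \ outNbhd r u) + #(outNbhd r u \ outNbhd r w) := by
          exact_mod_cast (card_le_card (sdiff_triangle _ _ _)).trans (card_union_le _ _)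
      _ ≤ 2 * L := by linarith [hL v u (pair_comm u v ▸ hv), hL u w hw]
  have := hT.card_add_one_le_of_card_outNbhd_sdiff_le hS hclose
  nlinarith

theorem IsTournament.two_mul_card_le_of_card_cyclicCompleters_le (hT : IsTournament r)
    {F : Finset (Finset V)} (hF : ∀ s ∈ F, #s = 2) (hF₀ : F.Nonempty) {c m t : ℝ}
    (hc : ∀ s ∈ F, (#(cyclicCompleters r s) : ℝ) ≤ c)
    (hbal : ∀ s ∈ F, ∀ v ∈ s, |(#(outNbhd r v) : ℝ) - m| ≤ t) :
    2 * (#F : ℝ) ≤ Fintype.card V * (8 * (c + 2 * t) - 1) := by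
  refine hT.two_mul_card_le_of_card_outNbhd_sdiff_le hF hF₀ fun a b hab => ?_
  have hne : a ≠ b := by
    rintro rfl
    simpa using hF _ hab
  have hdiff := abs_sub_le (#(outNbhd r a) : ℝ) m #(outNbhd r b)
  rw [abs_sub_comm m] at hdiff
  linarith [hT.card_outNbhd_sdiff_le hne, hc _ hab, hbal _ hab a (mem_insert_self a {b}),
    hbal _ hab b (mem_insert_of_mem (mem_singleton_self b))]

end OutNeighbourhoods

/-- Lemma 3.8: for `ε₁/24 > ε₂ > 0` there exist `δ > ε₁²(ε₁ - 24ε₂)/24³` and `N` such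
that every tournament on `n > N` vertices with at least `(1/24 - δ)n³` cyclic triangles
has fewer than `ε₁n²` unordered vertex pairs lying in at most `ε₂n` cyclic triangles. -/
theorem stmt18 (ε₁ ε₂ : ℝ) (h2 : 0 < ε₂) (h1 : ε₂ < ε₁ / 24) :
    ∃ δ : ℝ, ε₁ ^ 2 * (ε₁ - 24 * ε₂) / 24 ^ 3 < δ ∧ ∃ N : ℕ,
      ∀ n : ℕ, N < n → ∀ r : Fin n → Fin n → Prop, IsTournament r →
        ((1 : ℝ) / 24 - δ) * n ^ 3 ≤ ((cyclicTriangles n r).card : ℝ) →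
        (((Finset.powersetCard 2 (Finset.univ : Finset (Fin n))).filter
            (fun s => ((Finset.univ.filter (fun w : Fin n =>
              ∃ u v, u ∈ s ∧ v ∈ s ∧ u ≠ v ∧ r u v ∧ r v w ∧ r w u)).card : ℝ)
              ≤ ε₂ * n)).card : ℝ) < ε₁ * n ^ 2 := by
  have hε₁ : 0 < ε₁ := by linarith
  refine ⟨2 * (ε₁ ^ 2 * (ε₁ - 24 * ε₂) / 24 ^ 3),
    lt_two_mul_self (div_pos (mul_pos (by positivity) (by linarith)) (by norm_num)), 0,
    fun n hn r hT hcyc => ?_⟩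
  set D := (powersetCard 2 (univ : Finset (Fin n))).filter
    fun s => (#(cyclicCompleters r s) : ℝ) ≤ ε₂ * n
  suffices (#D : ℝ) < ε₁ * n ^ 2 by
    -- the statement decides membership via `Nat.decidableExistsFin`, `cyclicCompleters` does not
    convert this
    unfold cyclicCompleters
    congr
  by_contra! hD
  have hn₀ : (0 : ℝ) < n := by exact_mod_cast hn
  set t := ε₁ / 24 * n with ht_def
  set A : Finset (Fin n) := {v | |(#(outNbhd r v) : ℝ) - (n - 1) / 2| ≤ t}
  have ht : 0 < t := by positivity
  have hA : (#Aᶜ : ℝ) ≤ (ε₁ - 24 * ε₂) / 6 * n := by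
    simp only [A, compl_filter, not_le]
    refine le_of_mul_le_mul_right
      ((hT.card_filter_lt_abs_mul_sq_le ht.le hcyc).trans_eq ?_) (pow_pos ht 2)
    rw [ht_def]
    ring
  have hD2 : ∀ s ∈ D, #s = 2 := fun s hs => (mem_powersetCard.1 (mem_filter.1 hs).1).2
  set G := {s ∈ D | s ⊆ A}
  have hG : (#D : ℝ) ≤ #G + #Aᶜ * n := by
    have h := card_le_card_filter_subset_add_card_compl_mul hD2 A
    rw [Fintype.card_fin] at h
    exact_mod_cast h
  have hG₀ : G.Nonempty := by
    rw [← card_pos, ← Nat.cast_pos (α := ℝ)]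
    linarith [mul_pos hε₁ (pow_pos hn₀ 2), mul_pos h2 (pow_pos hn₀ 2),
      mul_le_mul_of_nonneg_right hA hn₀.le]
  have := hT.two_mul_card_le_of_card_cyclicCompleters_le (fun s hs => hD2 s (mem_filter.1 hs).1)
    hG₀ (fun s hs => (mem_filter.1 (mem_filter.1 hs).1).2)
    (fun s hs v hv => (mem_filter.1 ((mem_filter.1 hs).2 hv)).2)
  rw [Fintype.card_fin, ht_def] at this
  linarith [mul_pos hε₁ (pow_pos hn₀ 2), mul_le_mul_of_nonneg_right hA hn₀.le]
end
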